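/- arXiv:1509.00528 — 4 statements merged into one kernel-verified Lean document; each statement's English description precedes it below -/
import Mathlib

section
/- If G₁ and G₂ are finite groups each isomorphic to a subgroup of a finite direct product of copies of S₃, then the direct product G₁ × G₂ is also isomorphic to a subgroup of a finite direct product of copies of S₃, and every subgroup and every quotient of G₁ is as well. -/
/-!
In `S₃ⁿ` the kernel `P` of the componentwise sign is a normal abelian subgroup of exponent `3`
containing all squares and commutators; call such a subgroup an `S₃`-kernel. Having one is
inherited by products, subgroups and quotients, so it suffices to show that a finite group `G`
with an `S₃`-kernel `P` embeds into some `S₃ⁿ`. By Schur–Zassenhaus `G ≅ P ⋊ H` with `H` an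
elementary abelian `2`-group. Characters `χ : H → {±1} = 𝔽₃ˣ` separate the points of `H`, and as
`H` acts on the `𝔽₃`-vector space `P` by commuting involutions, `P` is separated by functionals
`ℓ` with `ℓ (h p h⁻¹) = χ h * ℓ p`. Each such pair gives `p h ↦ (x ↦ χ h * x + ℓ p)`, a map to
the affine group of `𝔽₃`, which is `S₃`.
-/

/-- A finite group is of *generalized `S₃`-type* if it embeds into a finite direct
product of copies of the symmetric group on `3` letters. -/
def IsGeneralizedS3Type (G : Type*) [Group G] : Prop :=
  ∃ (n : ℕ) (f : G →* (Fin n → Equiv.Perm (Fin 3))), Function.Injective f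

open Function
open scoped commutatorElement

structure Subgroup.IsS3Kernel {G : Type*} [Group G] (P : Subgroup G) : Prop where
  normal : P.Normal
  isMulCommutative : IsMulCommutative P
  pow_three : ∀ x ∈ P, x ^ 3 = 1
  sq_mem : ∀ g : G, g ^ 2 ∈ P
  commutator_mem : ∀ g h : G, ⁅g, h⁆ ∈ P

namespace Subgroup.IsS3Kernel

variable {G G' : Type*} [Group G] [Group G'] {P : Subgroup G}

theorem comap (hP : P.IsS3Kernel) {f : G' →* G} (hf : Injective f) :
    (P.comap f).IsS3Kernel where
  normal := hP.normal.comap f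
  isMulCommutative := have := hP.isMulCommutative; comap_injective_isMulCommutative P hf
  pow_three x hx := hf <| by rw [map_pow, map_one]; exact hP.pow_three _ hx
  sq_mem g := by simpa only [mem_comap, map_pow] using hP.sq_mem (f g)
  commutator_mem g h := by
    simpa only [mem_comap, map_commutatorElement] using hP.commutator_mem (f g) (f h)

theorem map (hP : P.IsS3Kernel) {f : G →* G'} (hf : Surjective f) : (P.map f).IsS3Kernel where
  normal := hP.normal.map f hf
  isMulCommutative := have := hP.isMulCommutative; inferInstance
  pow_three := by
    rintro _ ⟨x, hx, rfl⟩
    rw [← map_pow, hP.pow_three x hx, map_one]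
  sq_mem g := by
    obtain ⟨g, rfl⟩ := hf g
    exact ⟨_, hP.sq_mem g, map_pow f g 2⟩
  commutator_mem g h := by
    obtain ⟨g, rfl⟩ := hf g
    obtain ⟨h, rfl⟩ := hf h
    exact ⟨_, hP.commutator_mem g h, map_commutatorElement f g h⟩

theorem prod {Q : Subgroup G'} (hP : P.IsS3Kernel) (hQ : Q.IsS3Kernel) :
    (P.prod Q).IsS3Kernel where
  normal := have := hP.normal; have := hQ.normal; inferInstance
  isMulCommutative := by
    have := hP.isMulCommutative; have := hQ.isMulCommutative
    exact IsMulCommutative.of_setLike_mul_comm fun a ha b hb =>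
      Prod.ext (setLike_mul_comm ha.1 hb.1) (setLike_mul_comm ha.2 hb.2)
  pow_three x hx := Prod.ext (hP.pow_three _ hx.1) (hQ.pow_three _ hx.2)
  sq_mem g := ⟨hP.sq_mem g.1, hQ.sq_mem g.2⟩
  commutator_mem g h := ⟨hP.commutator_mem g.1 h.1, hQ.commutator_mem g.2 h.2⟩

theorem pi {ι : Type*} {G : ι → Type*} [∀ i, Group (G i)] {P : ∀ i, Subgroup (G i)}
    (hP : ∀ i, (P i).IsS3Kernel) : (Subgroup.pi Set.univ P).IsS3Kernel where
  normal := ⟨fun x hx g i _ => (hP i).normal.conj_mem _ (hx i trivial) (g i)⟩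
  isMulCommutative := by
    have := fun i => (hP i).isMulCommutative
    exact IsMulCommutative.of_setLike_mul_comm fun a ha b hb =>
      funext fun i => setLike_mul_comm (s := P i) (ha i trivial) (hb i trivial)
  pow_three x hx := funext fun i => (hP i).pow_three _ (hx i trivial)
  sq_mem g i _ := (hP i).sq_mem (g i)
  commutator_mem g h i _ := (hP i).commutator_mem (g i) (h i)

end Subgroup.IsS3Kernel

theorem isS3Kernel_alternatingGroup : (alternatingGroup (Fin 3)).IsS3Kernel where
  normal := inferInstance
  isMulCommutative := .of_setLike_mul_comm <| by
    simp only [Equiv.Perm.mem_alternatingGroup]; decide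
  pow_three := by simp only [Equiv.Perm.mem_alternatingGroup]; decide
  sq_mem := by simp only [Equiv.Perm.mem_alternatingGroup]; decide
  commutator_mem := by simp only [Equiv.Perm.mem_alternatingGroup]; decide

section CommutingInvolutions

variable {K W : Type*} [Field K] [AddCommGroup W] [Module K W]

theorem Module.End.exists_common_eigenvector_of_commute_of_involutive {ι : Type*}
    (h2 : (2 : K) ≠ 0) (T : ι → Module.End K W) (hcomm : ∀ i j, Commute (T i) (T j))
    (hinv : ∀ i, T i * T i = 1) (f : W →ₗ[K] K) (s : Finset ι) {w : W} (hw : f w ≠ 0) :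
    ∃ w', f w' ≠ 0 ∧ ∀ i ∈ s, ∃ c : K, T i w' = c • w' := by
  classical
  induction s using Finset.induction_on with
  | empty => exact ⟨w, hw, by simp⟩
  | insert i s _ ih =>
    obtain ⟨w, hw, hs⟩ := ih
    -- `w` is the sum of the `±1`-eigenvectors `(w ± T i w) / 2`, so one of them survives `f`.
    obtain ⟨ε, hε, hfε⟩ : ∃ ε : K, ε * ε = 1 ∧ f (w + ε • T i w) ≠ 0 := by
      by_cases hplus : f (w + (1 : K) • T i w) = 0
      · refine ⟨-1, by ring, fun hminus => hw ?_⟩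
        have : 2 * f w = 0 := by
          simp only [map_add, map_smul, smul_eq_mul] at hplus hminus
          linear_combination hplus + hminus
        exact (mul_eq_zero.mp this).resolve_left h2
      · exact ⟨1, one_mul 1, hplus⟩
    refine ⟨w + ε • T i w, hfε, fun j hj => ?_⟩
    rcases Finset.mem_insert.mp hj with rfl | hj
    · refine ⟨ε, ?_⟩
      rw [map_add, map_smul, ← Module.End.mul_apply, hinv, Module.End.one_apply, smul_add,
        smul_smul, hε, one_smul, add_comm]
    · obtain ⟨c, hc⟩ := hs j hj
      refine ⟨c, ?_⟩
      rw [map_add, map_smul, ← Module.End.mul_apply, ← (hcomm i j).eq, Module.End.mul_apply, hc,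
        map_smul, smul_add, smul_comm]

theorem Representation.exists_monoidHom_of_forall_exists_smul {H : Type*} [Monoid H]
    (ρ : Representation K H W) {w : W} (hw : w ≠ 0) (h : ∀ g, ∃ c : K, ρ g w = c • w) :
    ∃ χ : H →* K, ∀ g, ρ g w = χ g • w := by
  choose c hc using h
  have hinj : Injective fun a : K => a • w := smul_left_injective K hw
  refine ⟨{ toFun := c, map_one' := hinj ?_, map_mul' := fun g g' => hinj ?_ }, hc⟩
  · simp only [← hc, map_one, Module.End.one_apply, one_smul]
  · dsimp only
    rw [← hc, map_mul, Module.End.mul_apply, hc, map_smul, hc, smul_smul, mul_comm]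

theorem Representation.exists_eigenvector_of_sq_eq_one {H : Type*} [CommGroup H] [Finite H]
    (h2 : (2 : K) ≠ 0) (ρ : Representation K H W) (hH : ∀ g : H, g ^ 2 = 1)
    (f : W →ₗ[K] K) {w : W} (hw : f w ≠ 0) :
    ∃ w', f w' ≠ 0 ∧ ∃ χ : H →* K, ∀ g, ρ g w' = χ g • w' := by
  have := Fintype.ofFinite H
  obtain ⟨w', hw', hs⟩ := Module.End.exists_common_eigenvector_of_commute_of_involutive h2 ρ
    (fun g g' => by simp only [Commute, SemiconjBy, ← map_mul, mul_comm])
    (fun g => by rw [← map_mul, ← sq, hH, map_one]) f Finset.univ hw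
  exact ⟨w', hw', ρ.exists_monoidHom_of_forall_exists_smul (by rintro rfl; simp at hw')
    fun g => hs g (Finset.mem_univ g)⟩

end CommutingInvolutions

open scoped IsMulCommutative in
theorem exists_eigenfunctional_zmod_three {N H : Type*} [Group N] [IsMulCommutative N]
    [Group H] [IsMulCommutative H] [Finite H] (φ : H →* MulAut N) (hN : ∀ n : N, n ^ 3 = 1)
    (hH : ∀ h : H, h ^ 2 = 1) {n : N} (hn : n ≠ 1) :
    ∃ (ℓ : Additive N →+ ZMod 3) (χ : H →* (ZMod 3)ˣ),
      ℓ (.ofMul n) ≠ 0 ∧ ∀ h m, ℓ (.ofMul (φ h m)) = χ h * ℓ (.ofMul m) := by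
  let _ : Module (ZMod 3) (Additive N) := AddCommGroup.zmodModule fun x => hN x.toMul
  let ρ : Representation (ZMod 3) H (Additive N) :=
    { toFun h := (φ h).toMonoidHom.toAdditive.toZModLinearMap 3
      map_one' := by ext; simp
      map_mul' h h' := by ext; simp }
  obtain ⟨ℓ₀, hℓ₀⟩ : ∃ ℓ₀ : Module.Dual (ZMod 3) (Additive N), ℓ₀ (.ofMul n) ≠ 0 := by
    by_contra! h
    exact hn (Module.forall_dual_apply_eq_zero_iff (ZMod 3) (Additive.ofMul n) |>.mp h)
  obtain ⟨ℓ, hℓ, χ, hχ⟩ := ρ.dual.exists_eigenvector_of_sq_eq_one (by decide) hH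
    (Module.Dual.eval (ZMod 3) (Additive N) (.ofMul n)) hℓ₀
  refine ⟨ℓ.toAddMonoidHom, χ.toHomUnits, hℓ, fun h m => ?_⟩
  have hinv : h⁻¹ = h := inv_eq_of_mul_eq_one_left (by rw [← sq, hH])
  simpa [ρ, hinv, Module.Dual.transpose_apply] using LinearMap.congr_fun (hχ h) (.ofMul m)

instance ZMod.hasEnoughRootsOfUnity_three_two : HasEnoughRootsOfUnity (ZMod 3) 2 where
  prim := ⟨-1, IsPrimitiveRoot.neg_one 3 (by norm_num)⟩
  cyc := rootsOfUnity.isCyclic _ _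

namespace SemidirectProduct

variable {K N H : Type*} [CommRing K] [Group N] [Group H] {φ : H →* MulAut N}

def toAffinePerm (ℓ : Additive N →+ K) (χ : H →* Kˣ)
    (hℓ : ∀ h n, ℓ (.ofMul (φ h n)) = χ h * ℓ (.ofMul n)) : N ⋊[φ] H →* Equiv.Perm K :=
  lift ((MulAction.toPermHom (Multiplicative K) K).comp ℓ.toMultiplicativeRight)
    ((MulAction.toPermHom Kˣ K).comp χ) fun h => by
      ext n x
      simp [hℓ, Units.smul_def]

theorem toAffinePerm_apply (ℓ : Additive N →+ K) (χ : H →* Kˣ)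
    (hℓ : ∀ h n, ℓ (.ofMul (φ h n)) = χ h * ℓ (.ofMul n)) (g : N ⋊[φ] H) (x : K) :
    toAffinePerm ℓ χ hℓ g x = ℓ (.ofMul g.left) + χ g.right * x := by
  simp [toAffinePerm, lift, Units.smul_def]

open scoped IsMulCommutative in
theorem exists_monoidHom_perm_ne_one [IsMulCommutative N] [IsMulCommutative H] [Finite H]
    (hN : ∀ n : N, n ^ 3 = 1) (hH : ∀ h : H, h ^ 2 = 1) {x : N ⋊[φ] H} (hx : x ≠ 1) :
    ∃ ψ : N ⋊[φ] H →* Equiv.Perm (ZMod 3), ψ x ≠ 1 := by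
  obtain ⟨n, h⟩ := x
  by_cases hh : h = 1
  · subst hh
    have hn : n ≠ 1 := by rintro rfl; exact hx rfl
    obtain ⟨ℓ, χ, hℓn, hℓ⟩ := exists_eigenfunctional_zmod_three φ hN hH hn
    refine ⟨toAffinePerm ℓ χ hℓ, fun h1 => hℓn ?_⟩
    simpa [toAffinePerm_apply] using congr($h1 0)
  · have := HasEnoughRootsOfUnity.of_dvd (ZMod 3) (Monoid.exponent_dvd_of_forall_pow_eq_one hH)
    obtain ⟨χ, hχ⟩ := CommGroup.exists_apply_ne_one_of_hasEnoughRootsOfUnity H (ZMod 3) hh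
    refine ⟨toAffinePerm 0 χ (by simp), fun h1 => hχ (Units.ext ?_)⟩
    simpa [toAffinePerm_apply] using congr($h1 1)

end SemidirectProduct

theorem isGeneralizedS3Type_of_forall_exists_ne_one {G : Type*} [Group G] [Finite G]
    (h : ∀ g : G, g ≠ 1 → ∃ ψ : G →* Equiv.Perm (Fin 3), ψ g ≠ 1) : IsGeneralizedS3Type G := by
  have : Finite (G →* Equiv.Perm (Fin 3)) := .of_injective _ DFunLike.coe_injective
  obtain ⟨n, ⟨e⟩⟩ := Finite.exists_equiv_fin (G →* Equiv.Perm (Fin 3))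
  refine ⟨n, MonoidHom.pi fun i => e.symm i, (injective_iff_map_eq_one _).mpr fun g hg => ?_⟩
  by_contra hg1
  obtain ⟨ψ, hψ⟩ := h g hg1
  exact hψ (by simpa using congr_fun hg (e ψ))

namespace Subgroup.IsS3Kernel

variable {G : Type*} [Group G] {P : Subgroup G}

theorem exists_isComplement' [Finite G] (hP : P.IsS3Kernel) :
    ∃ H : Subgroup G, P.IsComplement' H := by
  have := hP.normal
  have h3 : IsPGroup 3 P := fun x => ⟨1, Subtype.ext (hP.pow_three x x.2)⟩
  have h2 : IsPGroup 2 (G ⧸ P) := fun q => by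
    obtain ⟨g, rfl⟩ := QuotientGroup.mk_surjective q
    exact ⟨1, (QuotientGroup.eq_one_iff _).mpr (hP.sq_mem g)⟩
  obtain ⟨a, ha⟩ := IsPGroup.iff_card.mp h3
  obtain ⟨b, hb⟩ := IsPGroup.iff_card.mp h2
  refine Subgroup.exists_right_complement'_of_coprime ?_
  rw [ha, index_eq_card, hb]
  exact Nat.coprime_pow_primes a b Nat.prime_three Nat.prime_two (by norm_num)

theorem sq_eq_one_of_isComplement' (hP : P.IsS3Kernel) {H : Subgroup G} (hH : P.IsComplement' H)
    (h : H) : h ^ 2 = 1 :=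
  Subtype.ext <| disjoint_def.mp hH.disjoint (hP.sq_mem h) (pow_mem h.2 2)

theorem isMulCommutative_of_isComplement' (hP : P.IsS3Kernel) {H : Subgroup G}
    (hH : P.IsComplement' H) : IsMulCommutative H :=
  .of_setLike_mul_comm fun a ha b hb => commutatorElement_eq_one_iff_mul_comm.mp <|
    disjoint_def.mp hH.disjoint (hP.commutator_mem a b) (⁅(⟨a, ha⟩ : H), ⟨b, hb⟩⁆ : H).2

theorem isGeneralizedS3Type [Finite G] (hP : P.IsS3Kernel) : IsGeneralizedS3Type G := by
  obtain ⟨H, hH⟩ := hP.exists_isComplement'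
  have := hP.normal
  have := hP.isMulCommutative
  have := hP.isMulCommutative_of_isComplement' hH
  let e := SemidirectProduct.mulEquivSubgroup hH
  refine isGeneralizedS3Type_of_forall_exists_ne_one fun g hg => ?_
  obtain ⟨ψ, hψ⟩ := SemidirectProduct.exists_monoidHom_perm_ne_one
    (fun x : P => Subtype.ext (hP.pow_three x x.2)) (hP.sq_eq_one_of_isComplement' hH)
    (x := e.symm g) (by simpa using hg)
  exact ⟨ψ.comp e.symm.toMonoidHom, hψ⟩

end Subgroup.IsS3Kernel

theorem isGeneralizedS3Type_iff {G : Type*} [Group G] :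
    IsGeneralizedS3Type G ↔ Finite G ∧ ∃ P : Subgroup G, P.IsS3Kernel := by
  refine ⟨fun ⟨_, f, hf⟩ => ⟨.of_injective f hf, _,
    (Subgroup.IsS3Kernel.pi fun _ => isS3Kernel_alternatingGroup).comap hf⟩, ?_⟩
  rintro ⟨_, P, hP⟩
  exact hP.isGeneralizedS3Type

universe u

theorem generalizedS3Type_closure_general (G₁ : Type u) (G₂ : Type u) [Group G₁] [Group G₂]
    (h₁ : IsGeneralizedS3Type G₁) (h₂ : IsGeneralizedS3Type G₂) :
    IsGeneralizedS3Type (G₁ × G₂) ∧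
      (∀ H : Subgroup G₁, IsGeneralizedS3Type H) ∧
      (∀ (Q : Type u) [Group Q] (f : G₁ →* Q), Function.Surjective f →
        IsGeneralizedS3Type Q) := by
  obtain ⟨_, P₁, hP₁⟩ := isGeneralizedS3Type_iff.mp h₁
  obtain ⟨_, P₂, hP₂⟩ := isGeneralizedS3Type_iff.mp h₂
  refine ⟨isGeneralizedS3Type_iff.mpr ⟨inferInstance, _, hP₁.prod hP₂⟩,
    fun H => isGeneralizedS3Type_iff.mpr ⟨inferInstance, _, hP₁.comap H.subtype_injective⟩,
    fun Q _ f hf => isGeneralizedS3Type_iff.mpr ⟨.of_surjective f hf, _, hP₁.map hf⟩⟩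

theorem generalizedS3Type_closure (G₁ : Type u) (G₂ : Type u) [Group G₁] [Group G₂]
    [Finite G₁] [Finite G₂]
    (h₁ : IsGeneralizedS3Type G₁) (h₂ : IsGeneralizedS3Type G₂) :
    IsGeneralizedS3Type (G₁ × G₂) ∧
      (∀ H : Subgroup G₁, IsGeneralizedS3Type H) ∧
      (∀ (Q : Type u) [Group Q] (f : G₁ →* Q), Function.Surjective f →
        IsGeneralizedS3Type Q) :=
  generalizedS3Type_closure_general G₁ G₂ h₁ h₂
end

section
/- Let K₂/K₁ be a finite Galois extension of number fields whose degree is a power of a prime q, let p be a prime distinct from q, and let E be an elliptic curve defined over ℚ. If the p-torsion subgroups satisfy E(K₁)[p] = E(K₂)[p], then the p-primary torsion subgroups satisfy E(K₁)(p) = E(K₂)(p); that is, if the p-torsion of E does not grow from K₁ to K₂, then neither does the p-primary torsion. -/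
/-!
The Galois group `G` of `K₂/K₁` acts on `E(K₂)` with fixed points `E(K₁)`. Let `p ^ (n + 1) P = 0`
and `σ ∈ G`. Since `p ^ n P` is `p`-torsion it is rational, so `D = σ P - P` is killed by `p ^ n`;
by induction on `n`, `D` is rational too. Then `σ ^ k P = P + k D`, and `σ ^ |G| = 1` gives
`|G| D = 0`. As `|G| = q ^ m` is prime to `p`, `D = 0`.
-/

open WeierstrassCurve WeierstrassCurve.Affine

section DistribMulAction

variable {G A : Type*} [Group G] [AddCommGroup A] [DistribMulAction G A]

lemma pow_smul_eq_add_nsmul_sub {g : G} {a : A} (hfix : g • (g • a - a) = g • a - a) (k : ℕ) :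
    g ^ k • a = a + k • (g • a - a) := by
  induction k with
  | zero => simp
  | succ k ih =>
    rw [pow_succ', mul_smul, ih, smul_add, smul_comm, hfix, succ_nsmul]
    abel

lemma smul_eq_self_of_sub_fixed [Finite G] {n : ℕ} (hn : n.Coprime (Nat.card G)) {g : G} {a : A}
    (hfix : g • (g • a - a) = g • a - a) (hkill : n • (g • a - a) = 0) : g • a = a := by
  have hcard : Nat.card G • (g • a - a) = 0 := by
    have := pow_smul_eq_add_nsmul_sub hfix (Nat.card G)
    rwa [pow_card_eq_one', one_smul, left_eq_add] at this
  have horder : addOrderOf (g • a - a) ∣ 1 :=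
    hn ▸ Nat.dvd_gcd (addOrderOf_dvd_of_nsmul_eq_zero hkill) (addOrderOf_dvd_of_nsmul_eq_zero hcard)
  rw [← sub_eq_zero, ← AddMonoid.addOrderOf_eq_one_iff, Nat.dvd_one.mp horder]

theorem smul_eq_self_of_mem_primaryComponent [Finite G] {p : ℕ} (hp : p.Coprime (Nat.card G))
    (htors : ∀ a : A, p • a = 0 → ∀ g : G, g • a = a) {a : A}
    (ha : a ∈ AddCommGroup.primaryComponent A p) (g : G) : g • a = a := by
  obtain ⟨n, hn⟩ := ha
  induction n generalizing a with
  | zero => rw [pow_zero, one_smul] at hn; rw [hn, smul_zero]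
  | succ n ih =>
    have hfix : g • (p ^ n • a) = p ^ n • a := htors _ (by rwa [← mul_smul, ← pow_succ']) g
    have hkill : p ^ n • (g • a - a) = 0 := by rw [smul_sub, smul_comm, hfix, sub_self]
    exact smul_eq_self_of_sub_fixed (hp.pow_left n) (ih hkill) hkill

end DistribMulAction

namespace WeierstrassCurve.Affine.Point

variable {R K L : Type*} [CommRing R] [Field K] [Field L] [DecidableEq L]
  [Algebra R K] [Algebra R L] [Algebra K L] [IsScalarTower R K L] {W : Affine R}

noncomputable instance : DistribMulAction (L ≃ₐ[K] L) (W⁄L).Point where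
  smul σ := map (σ : L →ₐ[K] L)
  one_smul P := by cases P <;> rfl
  mul_smul σ τ P := (map_map (τ : L →ₐ[K] L) (σ : L →ₐ[K] L) P).symm
  smul_zero _ := rfl
  smul_add σ := map_add (map (σ : L →ₐ[K] L))

lemma galois_smul_def (σ : L ≃ₐ[K] L) (P : (W⁄L).Point) : σ • P = map (σ : L →ₐ[K] L) P :=
  rfl

lemma galois_smul_map [DecidableEq K] (σ : L ≃ₐ[K] L) (Q : (W⁄K).Point) :
    σ • map (IsScalarTower.toAlgHom R K L) Q = map (IsScalarTower.toAlgHom R K L) Q := by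
  cases Q with
  | zero => rfl
  | some x y h =>
    simp only [galois_smul_def, map_some, some.injEq]
    exact ⟨σ.commutes x, σ.commutes y⟩

lemma exists_map_eq_of_forall_galois_smul_eq [DecidableEq K] [IsGalois K L] {P : (W⁄L).Point}
    (hP : ∀ σ : L ≃ₐ[K] L, σ • P = P) :
    ∃ Q : (W⁄K).Point, map (IsScalarTower.toAlgHom R K L) Q = P := by
  cases P with
  | zero => exact ⟨0, rfl⟩
  | some x y h =>
    have hσ (σ : L ≃ₐ[K] L) : σ x = x ∧ σ y = y := by
      simpa only [galois_smul_def, map_some, some.injEq, AlgEquiv.coe_toAlgHom] using hP σ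
    obtain ⟨x₀, rfl⟩ := (InfiniteGalois.mem_range_algebraMap_iff_fixed x).2 fun σ => (hσ σ).1
    obtain ⟨y₀, rfl⟩ := (InfiniteGalois.mem_range_algebraMap_iff_fixed y).2 fun σ => (hσ σ).2
    exact ⟨some x₀ y₀ <| (W.baseChange_nonsingular (IsScalarTower.toAlgHom R K L).injective ..).1 h,
      rfl⟩

end WeierstrassCurve.Affine.Point

open Classical in
theorem torsion_primary_component_stable_general (p q : ℕ) (hp : Fact p.Prime) (hq : q.Prime)
    (hpq : p ≠ q) (m : ℕ)
    (K₁ K₂ : Type) [Field K₁] [Field K₂] [NumberField K₁] [NumberField K₂]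
    [Algebra K₁ K₂] [IsGalois K₁ K₂] (hdeg : Module.finrank K₁ K₂ = q ^ m)
    (E : WeierstrassCurve ℚ)
    (hsame : ∀ P : (E.toAffine⁄K₂).Point, p • P = 0 →
      ∃ Q : (E.toAffine⁄K₁).Point,
        Affine.Point.map (W' := E.toAffine) (IsScalarTower.toAlgHom ℚ K₁ K₂) Q = P) :
    ∀ P : (E.toAffine⁄K₂).Point, P ∈ AddCommGroup.primaryComponent (E.toAffine⁄K₂).Point p →
      ∃ Q : (E.toAffine⁄K₁).Point,
        Affine.Point.map (W' := E.toAffine) (IsScalarTower.toAlgHom ℚ K₁ K₂) Q = P := by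
  have : FiniteDimensional K₁ K₂ := Module.finite_of_finrank_pos (hdeg ▸ pow_pos hq.pos m)
  have hcop : p.Coprime (Nat.card (K₂ ≃ₐ[K₁] K₂)) := by
    rw [IsGalois.card_aut_eq_finrank, hdeg]
    exact ((Nat.coprime_primes hp.out hq).2 hpq).pow_right m
  intro P hP
  refine Point.exists_map_eq_of_forall_galois_smul_eq
    (smul_eq_self_of_mem_primaryComponent hcop (fun a ha σ => ?_) hP)
  obtain ⟨Q, rfl⟩ := hsame a ha
  exact Point.galois_smul_map σ Q

open Classical in
theorem torsion_primary_component_stable (p q : ℕ) (hp : Fact p.Prime) (hq : q.Prime)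
    (hpq : p ≠ q) (m : ℕ)
    (K₁ K₂ : Type) [Field K₁] [Field K₂] [NumberField K₁] [NumberField K₂]
    [Algebra K₁ K₂] [IsGalois K₁ K₂] (hdeg : Module.finrank K₁ K₂ = q ^ m)
    (E : WeierstrassCurve ℚ) [E.IsElliptic]
    (hsame : ∀ P : (E.toAffine⁄K₂).Point, p • P = 0 →
      ∃ Q : (E.toAffine⁄K₁).Point,
        Affine.Point.map (W' := E.toAffine) (IsScalarTower.toAlgHom ℚ K₁ K₂) Q = P) :
    ∀ P : (E.toAffine⁄K₂).Point, P ∈ AddCommGroup.primaryComponent (E.toAffine⁄K₂).Point p →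
      ∃ Q : (E.toAffine⁄K₁).Point,
        Affine.Point.map (W' := E.toAffine) (IsScalarTower.toAlgHom ℚ K₁ K₂) Q = P :=
  torsion_primary_component_stable_general p q hp hq hpq m K₁ K₂ hdeg E hsame
end

section
/- The elliptic curve y² = x(x² − 6x + 13) over ℚ has Mordell–Weil group isomorphic to ℤ/2ℤ; that is, it has rank 0 and its only rational points are the point at infinity and (0,0). -/
/-!
Write a rational point with `x ≠ 0` as `x = p/E²`, `y = r/E³`; then
`r² = p (p² − 6pE² + 13E⁴)` with coprime factors up to the prime `13`, so (after dividing out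
`13` if `13 ∣ p`) both factors are squares and one obtains a primitive integer point on the
quartic `b² = a⁴ − 6a²e² + 13e⁴` with `e > 0`. Such points do not exist, by Fermat descent through
the `2`-isogenous curve `y² = x(x² + 12x − 16)`: writing `b² = (a² − 3e²)² + (2e²)²` as a
primitive Pythagorean triple gives `e = uv` and a point `a² = u⁴ + 3u²v² − v⁴`, and factoring
`(u² + 6w²)² − a² = 52w⁴` (where `v = 2w`) gives a new point on the first quartic with `e`
replaced by a divisor of `w`. Hence the only points are `O` and `(0, 0)`.
-/

open WeierstrassCurve WeierstrassCurve.Affine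

/-- The elliptic curve `y² = x(x² − 6x + 13) = x³ − 6x² + 13x` over `ℚ`. -/
def EDelta13 : WeierstrassCurve ℚ := ⟨0, -6, 0, 13, 0⟩

theorem Int.exists_sq_sq_of_isCoprime_of_mul_eq_sq {a b c : ℤ} (hab : IsCoprime a b)
    (ha : 0 ≤ a) (hb : 0 ≤ b) (h : a * b = c ^ 2) :
    ∃ p q : ℤ, 0 ≤ p ∧ 0 ≤ q ∧ a = p ^ 2 ∧ b = q ^ 2 ∧ |c| = p * q := by
  have sq_of_nonneg : ∀ {x y : ℤ}, IsCoprime x y → 0 ≤ x → x * y = c ^ 2 → ∃ p, x = p ^ 2 :=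
    fun hxy hx hxyc ↦ by
      obtain ⟨p, hp | hp⟩ := Int.sq_of_isCoprime hxy hxyc
      exacts [⟨p, hp⟩, ⟨p, by linarith [sq_nonneg p]⟩]
  obtain ⟨p, rfl⟩ := sq_of_nonneg hab ha h
  obtain ⟨q, rfl⟩ := sq_of_nonneg hab.symm hb (by rw [mul_comm, h])
  refine ⟨|p|, |q|, abs_nonneg p, abs_nonneg q, (sq_abs p).symm, (sq_abs q).symm, ?_⟩
  rw [← pow_left_inj₀ (abs_nonneg c) (by positivity) two_ne_zero]
  simp only [sq_abs, mul_pow, h]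

theorem isCoprime_of_isCoprime_add_of_mul_eq_mul_pow {R : Type*} [CommRing R] [IsDomain R]
    [IsPrincipalIdealRing R] [GCDMonoid R] {x y w k : R} {n : ℕ} (hk : Squarefree k)
    (hw : IsCoprime (x + y) w) (h : x * y = k * w ^ n) : IsCoprime x y := by
  rw [← gcd_isUnit_iff]
  have hdw : IsCoprime (gcd x y) w :=
    hw.of_isCoprime_of_dvd_left (dvd_add (gcd_dvd_left x y) (gcd_dvd_right x y))
  have hdd : gcd x y * gcd x y ∣ k * w ^ n :=
    h ▸ mul_dvd_mul (gcd_dvd_left x y) (gcd_dvd_right x y)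
  exact hk _ ((hdw.mul_left hdw).pow_right.dvd_of_dvd_mul_right hdd)

theorem Int.exists_eq_mul_pow_four_of_mul_eq_mul_pow_four {P Q W k : ℤ} (hP : 0 ≤ P)
    (hQ : 0 ≤ Q) (hPQ : IsCoprime P Q) (hk : 0 < k) (hkP : k ∣ P) (h : P * Q = k * W ^ 4) :
    ∃ p q : ℤ, 0 ≤ p ∧ 0 ≤ q ∧ IsCoprime p q ∧ |W| = p * q ∧ P = k * p ^ 4 ∧ Q = q ^ 4 := by
  obtain ⟨P, rfl⟩ := hkP
  have hP' : 0 ≤ P := (mul_nonneg_iff_of_pos_left hk).mp hP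
  have h' : P * Q = (W ^ 2) ^ 2 := mul_left_cancel₀ hk.ne' (by linear_combination h)
  obtain ⟨r, s, hr, hs, rfl, rfl, hrs⟩ :=
    Int.exists_sq_sq_of_isCoprime_of_mul_eq_sq hPQ.of_mul_left_right hP' hQ h'
  have hrs' : IsCoprime r s := (IsCoprime.pow_iff two_pos two_pos).mp hPQ.of_mul_left_right
  rw [abs_sq] at hrs
  obtain ⟨p, q, hp, hq, rfl, rfl, hpq⟩ :=
    Int.exists_sq_sq_of_isCoprime_of_mul_eq_sq hrs' hr hs hrs.symm
  exact ⟨p, q, hp, hq, (IsCoprime.pow_iff two_pos two_pos).mp hrs', hpq, by ring, by ring⟩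

theorem Int.exists_add_eq_of_mul_eq_prime_mul_pow_four {P Q W k : ℤ} (hP : 0 ≤ P)
    (hQ : 0 ≤ Q) (hPQ : IsCoprime P Q) (hk : Prime k) (hk0 : 0 < k) (h : P * Q = k * W ^ 4) :
    ∃ p q : ℤ, 0 ≤ p ∧ 0 ≤ q ∧ IsCoprime p q ∧ |W| = p * q ∧ P + Q = k * p ^ 4 + q ^ 4 := by
  rcases hk.dvd_or_dvd ⟨W ^ 4, h⟩ with hkP | hkQ
  · obtain ⟨p, q, hp, hq, hpq, hW, rfl, rfl⟩ :=
      Int.exists_eq_mul_pow_four_of_mul_eq_mul_pow_four hP hQ hPQ hk0 hkP h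
    exact ⟨p, q, hp, hq, hpq, hW, rfl⟩
  · obtain ⟨p, q, hp, hq, hpq, hW, rfl, rfl⟩ :=
      Int.exists_eq_mul_pow_four_of_mul_eq_mul_pow_four hQ hP hPQ.symm hk0 hkQ
        (by rw [mul_comm, h])
    exact ⟨p, q, hp, hq, hpq, hW, add_comm _ _⟩

theorem Rat.exists_eq_div_sq_of_sq_eq_cubic {x y : ℚ} {a b c : ℤ}
    (h : y ^ 2 = x ^ 3 + a * x ^ 2 + b * x + c) :
    ∃ p r E : ℤ, 0 < E ∧ IsCoprime p E ∧ x = p / E ^ 2 ∧ y = r / E ^ 3 := by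
  have reduced (z : ℚ) : ∃ p q : ℤ, 0 < q ∧ IsCoprime p q ∧ z = p / q :=
    ⟨z.num, z.den, by exact_mod_cast z.den_pos, Int.isCoprime_iff_gcd_eq_one.mpr z.reduced,
      (Rat.num_div_den z).symm⟩
  obtain ⟨p, q, hq, hpq, rfl⟩ := reduced x
  obtain ⟨r, s, hs, hrs, rfl⟩ := reduced y
  set N := p ^ 3 + q * (a * p ^ 2 + b * p * q + c * q ^ 2) with hN_def
  have hN : r ^ 2 * q ^ 3 = N * s ^ 2 := by
    have hq' : (q : ℚ) ≠ 0 := by positivity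
    have hs' : (s : ℚ) ≠ 0 := by positivity
    field_simp at h
    rw [hN_def]
    exact_mod_cast (by linear_combination h :
      (r : ℚ) ^ 2 * q ^ 3 = (p ^ 3 + q * (a * p ^ 2 + b * p * q + c * q ^ 2)) * s ^ 2)
  have hqN : IsCoprime q N := hpq.symm.pow_right.add_mul_left_right _
  have hqs : q ^ 3 = s ^ 2 := Int.dvd_antisymm (by positivity) (by positivity)
    (hqN.pow_left.dvd_of_dvd_mul_left ⟨r ^ 2, by linear_combination -hN⟩)
    ((hrs.symm.pow (m := 2) (n := 2)).dvd_of_dvd_mul_left ⟨N, by linear_combination hN⟩)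
  obtain ⟨E, rfl⟩ : q ∣ s := (Int.pow_dvd_pow_iff two_ne_zero).mp ⟨q, by linear_combination -hqs⟩
  have hqE : q = E ^ 2 := mul_left_cancel₀ (pow_ne_zero 2 hq.ne') (by linear_combination hqs)
  subst hqE
  refine ⟨p, r, E, pos_of_mul_pos_right hs (by positivity),
    hpq.of_isCoprime_of_dvd_right (dvd_pow_self E two_ne_zero), by push_cast; rfl, ?_⟩
  push_cast; ring

namespace EDelta13

def quartic (a e : ℤ) : ℤ := a ^ 4 - 6 * a ^ 2 * e ^ 2 + 13 * e ^ 4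

def isogenousQuartic (u v : ℤ) : ℤ := u ^ 4 + 3 * u ^ 2 * v ^ 2 - v ^ 4

theorem odd_and_even_of_sq_eq_quartic {a e b : ℤ} (hae : IsCoprime a e)
    (h : b ^ 2 = quartic a e) : Odd a ∧ Even e := by
  have h16 := congrArg (Int.cast : ℤ → ZMod 16) h
  push_cast [quartic] at h16
  rcases Int.even_or_odd a with ha | ⟨x, rfl⟩ <;> rcases Int.even_or_odd e with he | he
  · exact absurd (hae.isUnit_of_dvd' ha.two_dvd he.two_dvd) (by decide)
  · obtain ⟨x, rfl⟩ := ha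
    obtain ⟨y, rfl⟩ := he
    have key : ∀ X Y B : ZMod 16,
        B ^ 2 ≠ (X + X) ^ 4 - 6 * (X + X) ^ 2 * (2 * Y + 1) ^ 2 + 13 * (2 * Y + 1) ^ 4 := by
      decide
    exact absurd (by push_cast at h16; exact h16) (key _ _ _)
  · exact ⟨odd_two_mul_add_one x, he⟩
  · obtain ⟨y, rfl⟩ := he
    have key : ∀ X Y B : ZMod 16, B ^ 2 ≠
        (2 * X + 1) ^ 4 - 6 * (2 * X + 1) ^ 2 * (2 * Y + 1) ^ 2 + 13 * (2 * Y + 1) ^ 4 := by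
      decide
    exact absurd (by push_cast at h16; exact h16) (key _ _ _)

theorem odd_and_even_of_sq_eq_isogenousQuartic {u v a : ℤ} (huv : IsCoprime u v)
    (h : a ^ 2 = isogenousQuartic u v) : Odd u ∧ Even v := by
  have h8 := congrArg (Int.cast : ℤ → ZMod 8) h
  push_cast [isogenousQuartic] at h8
  rcases Int.even_or_odd u with hu | ⟨x, rfl⟩ <;> rcases Int.even_or_odd v with hv | hv
  · exact absurd (huv.isUnit_of_dvd' hu.two_dvd hv.two_dvd) (by decide)
  · obtain ⟨x, rfl⟩ := hu
    obtain ⟨y, rfl⟩ := hv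
    have key : ∀ X Y A : ZMod 8,
        A ^ 2 ≠ (X + X) ^ 4 + 3 * (X + X) ^ 2 * (2 * Y + 1) ^ 2 - (2 * Y + 1) ^ 4 := by
      decide
    exact absurd (by push_cast at h8; exact h8) (key _ _ _)
  · exact ⟨odd_two_mul_add_one x, hv⟩
  · obtain ⟨y, rfl⟩ := hv
    have key : ∀ X Y A : ZMod 8,
        A ^ 2 ≠ (2 * X + 1) ^ 4 + 3 * (2 * X + 1) ^ 2 * (2 * Y + 1) ^ 2 - (2 * Y + 1) ^ 4 := by
      decide
    exact absurd (by push_cast at h8; exact h8) (key _ _ _)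

theorem exists_sq_eq_isogenousQuartic_of_sq_eq_quartic {a e b : ℤ} (hae : IsCoprime a e)
    (he : 0 < e) (h : b ^ 2 = quartic a e) :
    ∃ u v : ℤ, 0 < v ∧ v ≤ e ∧ IsCoprime u v ∧ a ^ 2 = isogenousQuartic u v := by
  obtain ⟨ha, he2⟩ := odd_and_even_of_sq_eq_quartic hae h
  rw [quartic] at h
  have hx : Odd (a ^ 2 - 3 * e ^ 2) := ha.pow.sub_even ((he2.pow_of_ne_zero two_ne_zero).mul_left 3)
  have hxy : IsCoprime (a ^ 2 - 3 * e ^ 2) (2 * e ^ 2) := by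
    have hxe : IsCoprime (a ^ 2 - 3 * e ^ 2) e := by
      have := (hae.pow_left (m := 2)).add_mul_right_left (-3 * e)
      rwa [show a ^ 2 + -3 * e * e = a ^ 2 - 3 * e ^ 2 by ring] at this
    exact (Int.isCoprime_two_right.mpr hx).mul_right hxe.pow_right
  have hpyth : PythagoreanTriple (a ^ 2 - 3 * e ^ 2) (2 * e ^ 2) |b| := by
    rw [PythagoreanTriple, abs_mul_abs_self]; linear_combination -h
  obtain ⟨m, n, hx_eq, hy_eq, -, hmn, -, hm⟩ := hpyth.coprime_classification'
    (Int.isCoprime_iff_gcd_eq_one.mp hxy) (Int.odd_iff.mp hx) (by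
      rw [abs_pos]; rintro rfl; nlinarith [sq_nonneg (a ^ 2 - 3 * e ^ 2), pow_pos he 4])
  have hmn_eq : m * n = e ^ 2 := by linarith
  have hn : 0 ≤ n := (pos_of_mul_pos_right (hmn_eq ▸ pow_pos he 2) hm).le
  obtain ⟨u, v, hu, hv, rfl, rfl, huv⟩ := Int.exists_sq_sq_of_isCoprime_of_mul_eq_sq
    (Int.isCoprime_iff_gcd_eq_one.mpr hmn) hm hn hmn_eq
  rw [abs_of_pos he] at huv
  have hv : 0 < v := pos_of_mul_pos_right (huv ▸ he) hu
  have hu : 0 < u := pos_of_mul_pos_left (huv ▸ he) hv.le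
  refine ⟨u, v, hv, by nlinarith, ?_, ?_⟩
  · exact (IsCoprime.pow_iff two_pos two_pos).mp (Int.isCoprime_iff_gcd_eq_one.mpr hmn)
  · rw [isogenousQuartic]; linear_combination hx_eq + 3 * (e + u * v) * huv

theorem exists_sq_eq_quartic_of_sq_eq_isogenousQuartic {u v a : ℤ} (huv : IsCoprime u v)
    (hv : 0 < v) (h : a ^ 2 = isogenousQuartic u v) :
    ∃ p q : ℤ, 0 < p ∧ p < v ∧ IsCoprime q p ∧ u ^ 2 = quartic q p := by
  obtain ⟨hu, W, rfl⟩ := odd_and_even_of_sq_eq_isogenousQuartic huv h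
  rw [isogenousQuartic] at h
  have hW : 0 < W := by linarith
  have ha : Odd a := (Int.odd_pow' two_ne_zero).mp (by rw [h]; simp [parity_simps, hu])
  have hc : Odd (u ^ 2 + 6 * W ^ 2) := hu.pow.add_even ⟨3 * W ^ 2, by ring⟩
  obtain ⟨P, hP⟩ := hc.sub_odd ha
  obtain ⟨Q, hQ⟩ := hc.add_odd ha
  have hsum : P + Q = u ^ 2 + 6 * W ^ 2 := by linarith
  have hprod : P * Q = 13 * W ^ 4 := mul_left_cancel₀ four_ne_zero <| by
    linear_combination (-2 * Q) * hP - (u ^ 2 + 6 * W ^ 2 - a) * hQ - h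
  have hPQ_pos : 0 < P * Q := by rw [hprod]; positivity
  have hsum_pos : 0 < P + Q := by rw [hsum]; positivity
  have hcopW : IsCoprime (P + Q) W := by
    have huW : IsCoprime (u ^ 2) W := (huv.of_isCoprime_of_dvd_right ⟨2, by ring⟩).pow_left
    simpa [hsum, sq, mul_assoc] using huW.add_mul_right_left (6 * W)
  obtain ⟨p, q, hp, hq, hpq, hW', hsum'⟩ :=
    Int.exists_add_eq_of_mul_eq_prime_mul_pow_four (by nlinarith) (by nlinarith)
      (isCoprime_of_isCoprime_add_of_mul_eq_mul_pow
        (Int.prime_iff_natAbs_prime.mpr (by norm_num)).squarefree hcopW hprod)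
      (Int.prime_iff_natAbs_prime.mpr (by norm_num)) (by norm_num) hprod
  rw [abs_of_pos hW] at hW'
  have hp : 0 < p := lt_of_le_of_ne hp (by rintro rfl; rw [zero_mul] at hW'; linarith)
  have hq : 0 < q := pos_of_mul_pos_right (hW' ▸ hW) hp.le
  refine ⟨p, q, hp, by nlinarith, hpq.symm, ?_⟩
  rw [quartic]; linear_combination hsum' - hsum - 6 * (W + p * q) * hW'

theorem sq_ne_quartic {a e b : ℤ} (hae : IsCoprime a e) (he : 0 < e) : b ^ 2 ≠ quartic a e := by
  intro h
  obtain ⟨u, v, hv, hve, huv, h'⟩ := exists_sq_eq_isogenousQuartic_of_sq_eq_quartic hae he h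
  obtain ⟨p, q, hp, hpv, hqp, h''⟩ := exists_sq_eq_quartic_of_sq_eq_isogenousQuartic huv hv h'
  exact sq_ne_quartic hqp hp h''
termination_by e.toNat
decreasing_by omega

theorem num_eq_zero_of_sq_eq {p E r : ℤ} (hpE : IsCoprime p E) (hE : 0 < E)
    (h : r ^ 2 = p * (p ^ 2 - 6 * p * E ^ 2 + 13 * E ^ 4)) : p = 0 := by
  by_contra hp0
  have hf : 0 < p ^ 2 - 6 * p * E ^ 2 + 13 * E ^ 4 := by
    nlinarith [sq_nonneg (p - 3 * E ^ 2), pow_pos hE 4]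
  have hp : 0 < p := lt_of_le_of_ne (nonneg_of_mul_nonneg_left (h ▸ sq_nonneg r) hf) (Ne.symm hp0)
  have h13 : Prime (13 : ℤ) := Int.prime_iff_natAbs_prime.mpr (by norm_num)
  by_cases h13p : (13 : ℤ) ∣ p
  · obtain ⟨P, rfl⟩ := h13p
    obtain ⟨R, rfl⟩ : (13 : ℤ) ∣ r :=
      h13.dvd_of_dvd_pow (n := 2) ⟨P * (169 * P ^ 2 - 78 * P * E ^ 2 + 13 * E ^ 4), by rw [h]; ring⟩
    have hR : P * (13 * P ^ 2 - 6 * P * E ^ 2 + E ^ 4) = R ^ 2 :=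
      mul_left_cancel₀ (by norm_num : (169 : ℤ) ≠ 0) (by linear_combination -h)
    have hPE : IsCoprime P E := hpE.of_mul_left_right
    have hPf : IsCoprime P (13 * P ^ 2 - 6 * P * E ^ 2 + E ^ 4) := by
      have := (hPE.pow_right (n := 4)).add_mul_left_right (13 * P - 6 * E ^ 2)
      rwa [show E ^ 4 + P * (13 * P - 6 * E ^ 2) = 13 * P ^ 2 - 6 * P * E ^ 2 + E ^ 4 by ring]
        at this
    obtain ⟨A, B, hA, -, rfl, hB, -⟩ := Int.exists_sq_sq_of_isCoprime_of_mul_eq_sq hPf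
      (by linarith) (by nlinarith [sq_nonneg (E ^ 2 - 3 * P), sq_nonneg P]) hR
    have hA : 0 < A := lt_of_le_of_ne hA (by rintro rfl; simp at hp)
    exact sq_ne_quartic (b := B) ((IsCoprime.pow_left_iff two_pos).mp hPE).symm hA
      (by rw [quartic]; linear_combination -hB)
  · have hpf : IsCoprime p (p ^ 2 - 6 * p * E ^ 2 + 13 * E ^ 4) := by
      have := ((h13.coprime_iff_not_dvd.mpr h13p).symm.mul_right
        (hpE.pow_right (n := 4))).add_mul_left_right (p - 6 * E ^ 2)
      rwa [show 13 * E ^ 4 + p * (p - 6 * E ^ 2) = p ^ 2 - 6 * p * E ^ 2 + 13 * E ^ 4 by ring]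
        at this
    obtain ⟨A, B, -, -, rfl, hB, -⟩ :=
      Int.exists_sq_sq_of_isCoprime_of_mul_eq_sq hpf hp.le hf.le h.symm
    exact sq_ne_quartic (b := B) ((IsCoprime.pow_left_iff two_pos).mp hpE) hE
      (by rw [quartic]; linear_combination -hB)

theorem x_eq_zero_of_sq_eq {x y : ℚ} (h : y ^ 2 = x ^ 3 - 6 * x ^ 2 + 13 * x) : x = 0 := by
  obtain ⟨p, r, E, hE, hpE, rfl, rfl⟩ :=
    Rat.exists_eq_div_sq_of_sq_eq_cubic (x := x) (y := y) (a := -6) (b := 13) (c := 0)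
      (by push_cast; linear_combination h)
  have hE' : (E : ℚ) ≠ 0 := by positivity
  have hr : r ^ 2 = p * (p ^ 2 - 6 * p * E ^ 2 + 13 * E ^ 4) := by
    field_simp at h
    exact_mod_cast (by linear_combination h :
      (r : ℚ) ^ 2 = p * (p ^ 2 - 6 * p * E ^ 2 + 13 * E ^ 4))
  rw [num_eq_zero_of_sq_eq hpE hE hr, Int.cast_zero, zero_div]

theorem nonsingular_zero_zero : EDelta13.toAffine.Nonsingular 0 0 := by
  rw [nonsingular_iff, equation_iff]
  norm_num [EDelta13]

theorem eq_zero_or_eq_some_zero_zero (P : EDelta13.toAffine.Point) :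
    P = 0 ∨ ∃ h : EDelta13.toAffine.Nonsingular 0 0, P = .some 0 0 h := by
  rcases P with _ | @⟨x, y, h⟩
  · exact Or.inl rfl
  · have heq : y ^ 2 = x ^ 3 - 6 * x ^ 2 + 13 * x := by
      have := (equation_iff _ _).mp h.1
      simp only [EDelta13] at this
      linear_combination this
    obtain rfl := x_eq_zero_of_sq_eq heq
    obtain rfl : y = 0 := pow_eq_zero_iff two_ne_zero |>.mp (by rw [heq]; ring)
    exact Or.inr ⟨h, rfl⟩

end EDelta13

theorem mordellWeil_EDelta13 :
    Nonempty (EDelta13.toAffine.Point ≃+ ZMod 2) ∧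
    ∀ P : EDelta13.toAffine.Point, P = 0 ∨
      ∃ h : EDelta13.toAffine.Nonsingular 0 0, P = WeierstrassCurve.Affine.Point.some 0 0 h := by
  have hT := EDelta13.nonsingular_zero_zero
  have hcard : Nat.card EDelta13.toAffine.Point = 2 := by
    refine Nat.card_eq_two_iff.mpr ⟨0, .some 0 0 hT, (Point.some_ne_zero hT).symm, ?_⟩
    ext P
    rcases EDelta13.eq_zero_or_eq_some_zero_zero P with rfl | ⟨_, rfl⟩ <;> simp
  exact ⟨⟨addEquivOfPrimeCardEq hcard (Nat.card_zmod 2)⟩, EDelta13.eq_zero_or_eq_some_zero_zero⟩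
end

section
/- Let d ≥ 2 and let ℚ(d^∞) be the compositum inside ℚ̄ of all degree-d extensions of ℚ. Then for any finite Galois extension K/ℚ contained in ℚ(d^∞), the exponent of Gal(K/ℚ) divides the exponent of the symmetric group S_d. Consequently, ℚ(d^∞) contains only finitely many roots of unity. -/
/-- `ℚ(d^∞)`: the compositum inside an algebraic closure of `ℚ` of all degree-`d`
extensions of `ℚ`. -/
noncomputable def QDInfty (d : ℕ) : IntermediateField ℚ (AlgebraicClosure ℚ) :=
  IntermediateField.adjoin ℚ {β : AlgebraicClosure ℚ | (minpoly ℚ β).natDegree = d}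

/-!
An automorphism `τ` of `ℚ̄` permutes the at most `d` roots of the minimal polynomial of each
generator of `ℚ(d^∞)`, so `τ ^ λ(S_d)` fixes `ℚ(d^∞)` pointwise; since every automorphism of a
normal `K ⊆ ℚ(d^∞)` lifts to `ℚ̄`, this bounds the exponent of `Gal(K/ℚ)`.
If `ζ ∈ ℚ(d^∞)` is a primitive `n`-th root of unity, then `Gal(ℚ(ζ)/ℚ) ≃ (ℤ/nℤ)ˣ`, so the
Carmichael function `λ(n)` divides `e := λ(S_d)`. As `p ^ k ≤ 4 λ(p ^ k)` for prime powers, every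
prime power dividing `n` is at most `4 e`, hence `n ∣ (4 e)!` and `ζ` is a root of `X ^ (4 e)! - 1`.
-/

open Polynomial ArithmeticFunction Equiv IntermediateField

namespace Equiv.Perm

theorem exponent_dvd_exponent_perm_fin {α : Type*} [Finite α] {n : ℕ} (h : Nat.card α ≤ n) :
    Monoid.exponent (Perm α) ∣ Monoid.exponent (Perm (Fin n)) := by
  classical
  have := Fintype.ofFinite α
  obtain ⟨f⟩ : Nonempty (α ↪ Fin n) :=
    Function.Embedding.nonempty_of_card_le (by simpa [Nat.card_eq_fintype_card] using h)
  exact Monoid.exponent_dvd_of_monoidHom _ (extendDomainHom_injective f.toEquivRange)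

theorem pow_exponent_perm_fin_apply_eq_self {α : Type*} (σ : Perm α) {S : Set α} [Finite S]
    (hS : ∀ x, σ x ∈ S ↔ x ∈ S) {n : ℕ} (hcard : S.ncard ≤ n) {x : α} (hx : x ∈ S) :
    (σ ^ Monoid.exponent (Perm (Fin n))) x = x := by
  have hpow : σ.subtypePerm hS ^ Monoid.exponent (Perm (Fin n)) = 1 :=
    Monoid.exponent_dvd_iff_forall_pow_eq_one.1 (exponent_dvd_exponent_perm_fin hcard) _
  rw [subtypePerm_pow] at hpow
  exact congr_arg Subtype.val (Perm.ext_iff.1 hpow ⟨x, hx⟩)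

end Equiv.Perm

theorem AlgEquiv.pow_exponent_perm_fin_apply_eq_self_of_aeval_eq_zero {F E : Type*} [Field F]
    [Field E] [Algebra F E] (τ : E ≃ₐ[F] E) {p : F[X]} (hp : p ≠ 0) {β : E}
    (hβ : aeval β p = 0) : (τ ^ Monoid.exponent (Perm (Fin p.natDegree))) β = β := by
  have hroots : ∀ x, τ x ∈ p.rootSet E ↔ x ∈ p.rootSet E := by
    simp [mem_rootSet, aeval_algEquiv]
  have := (MulAction.toPermHom _ E τ).pow_exponent_perm_fin_apply_eq_self hroots
    (ncard_rootSet_le p E) (mem_rootSet.2 ⟨hp, hβ⟩)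
  rwa [← map_pow, MulAction.toPermHom_apply, MulAction.toPerm_apply, AlgEquiv.smul_def] at this

-- The library instances for `AlgebraicClosure k` are stated for its own `k`-algebra structure,
-- which for `k = ℚ` is not reducibly defeq to `DivisionRing.toRatAlgebra`, the one elaborated.
instance : Algebra.IsAlgebraic ℚ (AlgebraicClosure ℚ) := AlgebraicClosure.isAlgebraic ℚ
instance : IsAlgClosure ℚ (AlgebraicClosure ℚ) := AlgebraicClosure.instIsAlgClosure ℚ

theorem pow_exponent_perm_fin_apply_eq_self_of_mem_QDInfty {d : ℕ}
    (τ : AlgebraicClosure ℚ ≃ₐ[ℚ] AlgebraicClosure ℚ) {x : AlgebraicClosure ℚ}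
    (hx : x ∈ QDInfty d) : (τ ^ Monoid.exponent (Perm (Fin d))) x = x := by
  induction hx using adjoin_induction with
  | mem β hβ =>
    obtain rfl : (minpoly ℚ β).natDegree = d := hβ
    exact τ.pow_exponent_perm_fin_apply_eq_self_of_aeval_eq_zero
      (minpoly.ne_zero (Algebra.IsIntegral.isIntegral β)) (minpoly.aeval ℚ β)
  | algebraMap q => exact AlgEquiv.commutes _ q
  | add a b _ _ ha hb => rw [map_add, ha, hb]
  | inv a _ ha => rw [map_inv₀, ha]
  | mul a b _ _ ha hb => rw [map_mul, ha, hb]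

theorem exponent_dvd_exponent_perm_fin_of_le_QDInfty {d : ℕ}
    {K : IntermediateField ℚ (AlgebraicClosure ℚ)} [Normal ℚ K] (hK : K ≤ QDInfty d) :
    Monoid.exponent (K ≃ₐ[ℚ] K) ∣ Monoid.exponent (Perm (Fin d)) := by
  refine Monoid.exponent_dvd_of_forall_pow_eq_one fun σ => ?_
  obtain ⟨τ, rfl⟩ := AlgEquiv.restrictNormalHom_surjective (E := AlgebraicClosure ℚ) σ
  rw [← map_pow]
  refine AlgEquiv.ext fun x => Subtype.ext ?_
  exact (AlgEquiv.restrictNormal_commutes _ K x).trans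
    (pow_exponent_perm_fin_apply_eq_self_of_mem_QDInfty τ (hK x.2))

theorem carmichael_dvd_exponent_perm_fin_of_mem_QDInfty {d n : ℕ} [NeZero n]
    {ζ : AlgebraicClosure ℚ} (hζ : IsPrimitiveRoot ζ n) (hζd : ζ ∈ QDInfty d) :
    carmichael n ∣ Monoid.exponent (Perm (Fin d)) := by
  have : IsCyclotomicExtension {n} ℚ ℚ⟮ζ⟯ := hζ.intermediateField_adjoin_isCyclotomicExtension ℚ
  have := IsCyclotomicExtension.isGalois {n} ℚ ℚ⟮ζ⟯
  rw [carmichael_eq_exponent' n, ← Monoid.exponent_eq_of_mulEquiv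
    (IsCyclotomicExtension.autEquivPow ℚ⟮ζ⟯ (cyclotomic.irreducible_rat (NeZero.pos n)))]
  exact exponent_dvd_exponent_perm_fin_of_le_QDInfty (adjoin_simple_le_iff.2 hζd)

namespace ArithmeticFunction

theorem prime_pow_le_four_mul_carmichael {p : ℕ} (hp : p.Prime) (k : ℕ) :
    p ^ k ≤ 4 * carmichael (p ^ k) := by
  rcases eq_or_ne p 2 with rfl | hp2
  · rcases eq_or_ne k 2 with rfl | hk
    · rw [carmichael_two_pow_of_le_two le_rfl]
      norm_num
    · rw [carmichael_two_pow_of_ne_two hk]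
      calc 2 ^ k ≤ 2 ^ (k - 2 + 2) := Nat.pow_le_pow_right two_pos (by omega)
        _ = 4 * 2 ^ (k - 2) := by ring
  · rw [carmichael_pow_of_prime_ne_two k hp hp2]
    rcases k with _ | k
    · simp
    · rw [Nat.totient_prime_pow_succ hp, pow_succ]
      have : p ≤ 4 * (p - 1) := by have := hp.two_le; omega
      calc p ^ k * p ≤ p ^ k * (4 * (p - 1)) := Nat.mul_le_mul_left _ this
        _ = 4 * (p ^ k * (p - 1)) := by ring

theorem dvd_factorial_of_carmichael_dvd {n e : ℕ} (he : e ≠ 0) (h : carmichael n ∣ e) :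
    n ∣ (4 * e).factorial := by
  refine (Nat.dvd_iff_prime_pow_dvd_dvd _ n).2 fun p k hp hpk => ?_
  have hle : carmichael (p ^ k) ≤ e :=
    Nat.le_of_dvd (Nat.pos_of_ne_zero he) ((carmichael_dvd hpk).trans h)
  exact Nat.dvd_factorial (pow_pos hp.pos k)
    ((prime_pow_le_four_mul_carmichael hp k).trans (by omega))

end ArithmeticFunction

theorem exponent_bound_and_finitely_many_roots_of_unity_general (d : ℕ) :
    (∀ K : IntermediateField ℚ (AlgebraicClosure ℚ), K ≤ QDInfty d →
      FiniteDimensional ℚ K → IsGalois ℚ K →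
      Monoid.exponent (K ≃ₐ[ℚ] K) ∣ Monoid.exponent (Equiv.Perm (Fin d))) ∧
    {x : AlgebraicClosure ℚ | x ∈ QDInfty d ∧ ∃ n : ℕ, 0 < n ∧ x ^ n = 1}.Finite := by
  refine ⟨fun K hK _ _ => exponent_dvd_exponent_perm_fin_of_le_QDInfty hK, ?_⟩
  refine (nthRootsFinset (4 * Monoid.exponent (Perm (Fin d))).factorial
    (1 : AlgebraicClosure ℚ)).finite_toSet.subset ?_
  rintro x ⟨hx, n, hn, hxn⟩
  have : NeZero (orderOf x) := ⟨(isOfFinOrder_iff_pow_eq_one.2 ⟨n, hn, hxn⟩).orderOf_pos.ne'⟩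
  have hdvd := dvd_factorial_of_carmichael_dvd Monoid.exponent_ne_zero_of_finite
    (carmichael_dvd_exponent_perm_fin_of_mem_QDInfty (IsPrimitiveRoot.orderOf x) hx)
  rw [Finset.mem_coe, mem_nthRootsFinset (Nat.factorial_pos _)]
  exact orderOf_dvd_iff_pow_eq_one.1 hdvd

theorem exponent_bound_and_finitely_many_roots_of_unity (d : ℕ) (hd : 2 ≤ d) :
    (∀ K : IntermediateField ℚ (AlgebraicClosure ℚ), K ≤ QDInfty d →
      FiniteDimensional ℚ K → IsGalois ℚ K →
      Monoid.exponent (K ≃ₐ[ℚ] K) ∣ Monoid.exponent (Equiv.Perm (Fin d))) ∧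
    {x : AlgebraicClosure ℚ | x ∈ QDInfty d ∧ ∃ n : ℕ, 0 < n ∧ x ^ n = 1}.Finite :=
  exponent_bound_and_finitely_many_roots_of_unity_general d
end
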